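/- Let n ≥ 1 and let R = ℂ[x_{ij} : 1 ≤ i,j ≤ n] be the polynomial ring in the entries of a generic n×n matrix X. Let I ⊆ R be the ideal generated by the entries of X² (i.e. the polynomials ∑_k x_{ik} x_{kj} for all i,j) together with all 2×2 minors of X (i.e. x_{ik} x_{jl} − x_{il} x_{jk} for all i,j,k,l). Let π : R → ℂ[t_1,…,t_n] be the ℂ-algebra homomorphism sending x_{ii} ↦ t_i and x_{ij} ↦ 0 for i ≠ j (restriction of functions to the diagonal Cartan subalgebra). Then the image ideal π(I) ⊆ ℂ[t_1,…,t_n] equals the ideal generated by all products t_i t_j (1 ≤ i,j ≤ n). -/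

import Mathlib

open MvPolynomial

/-!
Restricted to the diagonal, every variable `x_ij` becomes `t_i` or `0`, so the image of a
quadratic monomial `x_p x_q` is `0` or some `t_i t_j`; as the generators of `I` are sums and
differences of such monomials, `π(I)` lies in `(t_i t_j)`. Conversely the minor
`x_ii x_jj - x_ij x_ji` restricts to `t_i t_j` for `i ≠ j`, and the diagonal entry `(X²)_ii`
restricts to `t_i²`.
-/

namespace MvPolynomial

variable (R ι : Type*) [CommSemiring R] [DecidableEq ι]

noncomputable def diagRestrict : MvPolynomial (ι × ι) R →ₐ[R] MvPolynomial ι R :=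
  aeval fun p => if p.1 = p.2 then X p.1 else 0

variable {R ι}

theorem diagRestrict_X (i j : ι) :
    diagRestrict R ι (X (i, j)) = if i = j then X i else 0 :=
  aeval_X _ _

theorem diagRestrict_X_mul_X_mem (p q : ι × ι) :
    diagRestrict R ι (X p * X q) ∈ Ideal.span {r | ∃ i j : ι, r = X i * X j} := by
  rw [map_mul, diagRestrict_X, diagRestrict_X]
  split_ifs
  · exact Ideal.subset_span ⟨_, _, rfl⟩
  all_goals simp

theorem diagRestrict_X_mul_X_of_ne {i j : ι} (hij : i ≠ j) :
    diagRestrict R ι (X (i, j) * X (j, i)) = 0 := by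
  simp [diagRestrict_X, hij]

theorem diagRestrict_sq_entry_self [Fintype ι] (i : ι) :
    diagRestrict R ι (∑ k, X (i, k) * X (k, i)) = X i * X i := by
  rw [map_sum, Finset.sum_eq_single i]
  · simp [diagRestrict_X]
  · intro k _ hki
    exact diagRestrict_X_mul_X_of_ne hki.symm
  · simp

theorem diagRestrict_minor_of_ne {R : Type*} [CommRing R] {i j : ι} (hij : i ≠ j) :
    diagRestrict R ι (X (i, i) * X (j, j) - X (i, j) * X (j, i)) = X i * X j := by
  rw [map_sub, diagRestrict_X_mul_X_of_ne hij, sub_zero, map_mul, diagRestrict_X,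
    diagRestrict_X, if_pos rfl, if_pos rfl]

end MvPolynomial

theorem stmt_0_general (n : ℕ)
    (π : MvPolynomial (Fin n × Fin n) ℂ →ₐ[ℂ] MvPolynomial (Fin n) ℂ)
    (hπ : π = aeval fun p : Fin n × Fin n =>
      if p.1 = p.2 then (X p.1 : MvPolynomial (Fin n) ℂ) else 0)
    (I : Ideal (MvPolynomial (Fin n × Fin n) ℂ))
    (hI : I = Ideal.span
      ({q | ∃ i j : Fin n, q = ∑ k : Fin n, X (i, k) * X (k, j)} ∪
       {q | ∃ i j k l : Fin n, q = X (i, k) * X (j, l) - X (i, l) * X (j, k)})) :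
    Ideal.map π I =
      Ideal.span {q : MvPolynomial (Fin n) ℂ | ∃ i j : Fin n, q = X i * X j} := by
  change π = diagRestrict ℂ (Fin n) at hπ
  subst hπ hI
  apply le_antisymm
  · rw [Ideal.map_span, Ideal.span_le]
    rintro _ ⟨q, ⟨i, j, rfl⟩ | ⟨i, j, k, l, rfl⟩, rfl⟩
    · rw [map_sum]
      exact Ideal.sum_mem _ fun k _ => diagRestrict_X_mul_X_mem _ _
    · rw [map_sub]
      exact Ideal.sub_mem _ (diagRestrict_X_mul_X_mem _ _) (diagRestrict_X_mul_X_mem _ _)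
  · rw [Ideal.span_le]
    rintro _ ⟨i, j, rfl⟩
    rcases eq_or_ne i j with rfl | hij
    · rw [← diagRestrict_sq_entry_self]
      exact Ideal.mem_map_of_mem _ (Ideal.subset_span (Or.inl ⟨i, i, rfl⟩))
    · rw [← diagRestrict_minor_of_ne hij]
      exact Ideal.mem_map_of_mem _ (Ideal.subset_span (Or.inr ⟨i, j, i, j, rfl⟩))

/-- The image under restriction to the diagonal of the ideal of the minimal
nilpotent orbit closure in `gl(n, ℂ)` (cut out by `X² = 0` and all 2×2 minors)
is the ideal generated by the products `t_i t_j`. -/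
theorem stmt_0 (n : ℕ) (hn : 1 ≤ n)
    (π : MvPolynomial (Fin n × Fin n) ℂ →ₐ[ℂ] MvPolynomial (Fin n) ℂ)
    (hπ : π = aeval fun p : Fin n × Fin n =>
      if p.1 = p.2 then (X p.1 : MvPolynomial (Fin n) ℂ) else 0)
    (I : Ideal (MvPolynomial (Fin n × Fin n) ℂ))
    (hI : I = Ideal.span
      ({q | ∃ i j : Fin n, q = ∑ k : Fin n, X (i, k) * X (k, j)} ∪
       {q | ∃ i j k l : Fin n, q = X (i, k) * X (j, l) - X (i, l) * X (j, k)})) :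
    Ideal.map π I =
      Ideal.span {q : MvPolynomial (Fin n) ℂ | ∃ i j : Fin n, q = X i * X j} :=
  stmt_0_general n π hπ I hI
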